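/- Let q be a prime power, t a positive integer, and 0 ≤ R1 < 1. Then the asymptotic metric δ⁰_q(t, R1, R1) = limsup_{n→∞} max{ d/n : there exist nested linear codes C2 ⊆ C1 ⊆ F_q^n with t ≤ dim C1 − dim C2, dim C1 ≥ nR1, dim C2 ≤ nR1, and M_t(C1, C2) ≥ d } satisfies δ⁰_q(t, R1, R1) = 1 − R1. -/

import Mathlib

/-!
Upper bound: every subspace `C₂ ≤ F^n` has a coordinate complement `V_I` (an information set
`Iᶜ` of size `dim C₂`). Shrinking `I` to `n - dim C₁ + t` coordinates keeps `C₂ ⊓ V_I = 0` while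
`dim (C₁ ⊓ V_I) ≥ t`, which is the Singleton-type bound `M_t(C₁, C₂) ≤ n - dim C₁ + t`; hence
`d / n ≤ 1 - R₁ + t / n`.

Lower bound: take `C₂ = V_K` with `|K| = ⌊n R₁⌋` and `C₁ ⊇ C₂` of dimension `|K| + t` containing
the all-ones vector. When `dim C₁ - dim C₂ = t`, a set `I` with
`dim (C₁ ⊓ V_I) - dim (C₂ ⊓ V_I) ≥ t` forces `C₁ = C₂ + C₁ ⊓ V_I ≤ V_{K ∪ I}`, so `K ∪ I` is
everything and `|I| ≥ n - ⌊n R₁⌋`.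
-/

/-- `V_I = {x ∈ F^n : i ∉ I → x i = 0}` -/
noncomputable def VI (F : Type) [Field F] (n : ℕ) (I : Finset (Fin n)) :
    Submodule F (Fin n → F) :=
  Submodule.pi (↑I)ᶜ (fun _ => (⊥ : Submodule F F))

/-- the `t`-th relative generalized Hamming weight of `C₂ ⊆ C₁ ⊆ F^n` -/
noncomputable def RGHW (F : Type) [Field F] {n : ℕ} (t : ℕ)
    (C₁ C₂ : Submodule F (Fin n → F)) : ℕ :=
  sInf {d : ℕ | ∃ I : Finset (Fin n), I.card = d ∧
    Module.finrank F ↥(C₁ ⊓ VI F n I) ≥ Module.finrank F ↥(C₂ ⊓ VI F n I) + t}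

/-- `π(q) = ∏_{i=1}^∞ (1 - q^{-i})` -/
noncomputable def piq (q : ℝ) : ℝ := ∏' i : ℕ, (1 - (q ^ (i + 1))⁻¹)

/-- `N₁(w,u) = ∏_{i=0}^{u-1}(q^w - q^i) / ∏_{i=0}^{u-1}(q^u - q^i)` -/
noncomputable def N1 (q : ℝ) (w u : ℕ) : ℝ :=
  (∏ i ∈ Finset.range u, (q ^ w - q ^ i)) / (∏ i ∈ Finset.range u, (q ^ u - q ^ i))

/-- `N₂(w,u,v) = ∏_{i=0}^{v-1}(q^w - q^{u+i}) / ∏_{i=0}^{v-1}(q^v - q^i)` -/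
noncomputable def N2 (q : ℝ) (w u v : ℕ) : ℝ :=
  (∏ i ∈ Finset.range v, (q ^ w - q ^ (u + i))) / (∏ i ∈ Finset.range v, (q ^ v - q ^ i))

/-- `N₃(w,u,v,a) = N₁(u,a) · N₂(w-a, u-a, v-a)` -/
noncomputable def N3 (q : ℝ) (w u v a : ℕ) : ℝ :=
  N1 q u a * N2 q (w - a) (u - a) (v - a)

open Module

theorem Submodule.le_sup_of_finrank_add_le {K V : Type*} [DivisionRing K] [AddCommGroup V]
    [Module K V] [FiniteDimensional K V] {C₁ C₂ A : Submodule K V} (h : C₂ ≤ C₁)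
    (hA : finrank K C₁ + finrank K ↥(C₂ ⊓ A) ≤ finrank K C₂ + finrank K ↥(C₁ ⊓ A)) :
    C₁ ≤ C₂ ⊔ A := by
  have hinf : C₁ ⊓ A ⊓ C₂ = C₂ ⊓ A := by
    rw [inf_right_comm, inf_eq_right.2 h]
  have hdim := Submodule.finrank_sup_add_finrank_inf_eq (C₁ ⊓ A) C₂
  rw [hinf] at hdim
  have heq : C₁ ⊓ A ⊔ C₂ = C₁ :=
    Submodule.eq_of_le_of_finrank_le (sup_le inf_le_left h) (by omega)
  rw [← heq, sup_comm]
  exact sup_le_sup_left inf_le_right _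

section VI

variable {F : Type} [Field F] {n : ℕ}

theorem mem_VI {I : Finset (Fin n)} {x : Fin n → F} : x ∈ VI F n I ↔ ∀ i ∉ I, x i = 0 := by
  simp [VI, Submodule.mem_pi]

theorem VI_mono {I J : Finset (Fin n)} (h : I ⊆ J) : VI F n I ≤ VI F n J :=
  fun _ hx => mem_VI.2 fun i hi => mem_VI.1 hx i fun hiI => hi (h hiI)

theorem VI_empty : VI F n ∅ = ⊥ := by
  ext x
  simp [mem_VI, funext_iff]

theorem VI_univ : VI F n Finset.univ = ⊤ := by
  ext x
  simp [mem_VI]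

theorem VI_sup_VI_le (I J : Finset (Fin n)) : VI F n I ⊔ VI F n J ≤ VI F n (I ∪ J) :=
  sup_le (VI_mono Finset.subset_union_left) (VI_mono Finset.subset_union_right)

theorem eq_univ_of_one_mem_VI {I : Finset (Fin n)} (h : (1 : Fin n → F) ∈ VI F n I) :
    I = Finset.univ :=
  Finset.eq_univ_of_forall fun i => by_contra fun hi => one_ne_zero (mem_VI.1 h i hi)

theorem finrank_VI (I : Finset (Fin n)) : finrank F (VI F n I) = I.card := by
  classical
  have hVI : VI F n I = ⨅ i ∈ (↑I : Set (Fin n))ᶜ,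
      LinearMap.ker (LinearMap.proj i : (Fin n → F) →ₗ[F] F) := by
    rw [VI, ← Submodule.biInf_comap_proj]
    rfl
  rw [hVI, (LinearMap.iInfKerProjEquiv F (fun _ => F) disjoint_compl_right
    (by simp)).finrank_eq]
  simp

theorem VI_insert_le (j : Fin n) (I : Finset (Fin n)) :
    VI F n (insert j I) ≤ VI F n I ⊔ F ∙ Pi.single j 1 := by
  classical
  intro x hx
  refine Submodule.mem_sup.2 ⟨x - x j • Pi.single j 1, mem_VI.2 fun i hi => ?_,
    x j • Pi.single j 1, Submodule.smul_mem _ _ (Submodule.mem_span_singleton_self _),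
    sub_add_cancel _ _⟩
  by_cases hij : i = j
  · subst hij
    simp
  · simp [hij, mem_VI.1 hx i (by simp [hij, hi])]

theorem exists_isCompl_VI (C : Submodule F (Fin n → F)) :
    ∃ I : Finset (Fin n), IsCompl C (VI F n I) := by
  classical
  obtain ⟨I, hI, hmax⟩ := (Finset.univ.filter fun I => Disjoint C (VI F n I)).exists_max_image
    Finset.card ⟨∅, by simp [VI_empty]⟩
  rw [Finset.mem_filter] at hI
  refine ⟨I, hI.2, codisjoint_iff.2 <| by_contra fun hne => ?_⟩
  obtain ⟨j, hj⟩ : ∃ j, Pi.single j 1 ∉ C ⊔ VI F n I := by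
    by_contra! h
    refine hne (eq_top_iff.2 ?_)
    rw [← (Pi.basisFun F (Fin n)).span_eq, Submodule.span_le]
    rintro _ ⟨j, rfl⟩
    simpa using h j
  have hjI : j ∉ I := fun hjI =>
    hj <| Submodule.mem_sup_right <| mem_VI.2 fun i hi => by
      simp [Ne.symm (ne_of_mem_of_not_mem hjI hi)]
  have hdisj : Disjoint C (VI F n (insert j I)) :=
    (hI.2.disjoint_sup_right_of_disjoint_sup_left
      (Submodule.disjoint_span_singleton_of_notMem hj)).mono_right (VI_insert_le j I)
  have := hmax (insert j I) (by simp [hdisj])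
  rw [Finset.card_insert_of_notMem hjI] at this
  omega

theorem RGHW_le_card {t : ℕ} {C₁ C₂ : Submodule F (Fin n → F)} {I : Finset (Fin n)}
    (h : finrank F ↥(C₂ ⊓ VI F n I) + t ≤ finrank F ↥(C₁ ⊓ VI F n I)) :
    RGHW F t C₁ C₂ ≤ I.card :=
  Nat.sInf_le ⟨I, rfl, h⟩

theorem RGHW_le {t : ℕ} {C₁ C₂ : Submodule F (Fin n → F)}
    (h : finrank F C₂ + t ≤ finrank F C₁) : RGHW F t C₁ C₂ ≤ n + t - finrank F C₁ := by
  obtain ⟨I, hI⟩ := exists_isCompl_VI C₂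
  have hC₂I : finrank F C₂ + I.card = n := by
    have := Submodule.finrank_sup_add_finrank_inf_eq C₂ (VI F n I)
    rw [hI.sup_eq_top, hI.inf_eq_bot, finrank_top, finrank_bot, finrank_VI] at this
    simpa using this.symm
  have hC₁ : finrank F C₁ ≤ n := by simpa using C₁.finrank_le
  obtain ⟨J, hJI, hJ⟩ := Finset.exists_subset_card_eq (s := I) (n := n + t - finrank F C₁)
    (by omega)
  have hC₂J : C₂ ⊓ VI F n J = ⊥ := eq_bot_iff.2 (hI.inf_eq_bot ▸ inf_le_inf_left _ (VI_mono hJI))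
  have hC₁J : finrank F C₁ + J.card ≤ finrank F ↥(C₁ ⊓ VI F n J) + n := by
    have := Submodule.finrank_sup_add_finrank_inf_eq C₁ (VI F n J)
    have := (C₁ ⊔ VI F n J).finrank_le
    simp only [finrank_VI, finrank_fin_fun] at *
    omega
  exact hJ ▸ RGHW_le_card (by rw [hC₂J, finrank_bot]; omega)

end VI

section Construction

variable {F : Type} [Field F] {n : ℕ}

theorem sub_card_le_RGHW {t : ℕ} {K : Finset (Fin n)} {C : Submodule F (Fin n → F)}
    (hK : VI F n K ≤ C) (hC : finrank F C = K.card + t) (hone : (1 : Fin n → F) ∈ C) :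
    n - K.card ≤ RGHW F t C (VI F n K) := by
  refine le_csInf ⟨n, Finset.univ, by simp, ?_⟩ ?_
  · rw [VI_univ, inf_top_eq, inf_top_eq, hC, finrank_VI]
  rintro _ ⟨I, rfl, hI⟩
  have hCI : C ≤ VI F n K ⊔ VI F n I :=
    Submodule.le_sup_of_finrank_add_le hK (by rw [hC, finrank_VI]; omega)
  have hKI := eq_univ_of_one_mem_VI (VI_sup_VI_le K I (hCI hone))
  have := Finset.card_union_le K I
  rw [hKI, Finset.card_univ, Fintype.card_fin] at this
  omega

theorem exists_VI_le_one_mem {t : ℕ} (ht : 1 ≤ t) {K : Finset (Fin n)} (hK : K.card + t ≤ n) :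
    ∃ C : Submodule F (Fin n → F), VI F n K ≤ C ∧ finrank F C = K.card + t ∧
      (1 : Fin n → F) ∈ C := by
  obtain ⟨K', hKK', hK'⟩ := Finset.exists_superset_card_eq (s := K) (n := K.card + (t - 1))
    (by omega) (by simp; omega)
  have hone : (1 : Fin n → F) ∉ VI F n K' := fun h => by
    have := congrArg Finset.card (eq_univ_of_one_mem_VI h)
    simp at this
    omega
  refine ⟨VI F n K' ⊔ F ∙ 1, (VI_mono hKK').trans le_sup_left, ?_,
    Submodule.mem_sup_right (Submodule.mem_span_singleton_self _)⟩
  rw [Submodule.finrank_sup_span_singleton hone, finrank_VI]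
  omega

end Construction

theorem eventually_floor_mul_add_le {R : ℝ} (hR0 : 0 ≤ R) (hR1 : R < 1) (t : ℕ) :
    ∀ᶠ n : ℕ in Filter.atTop, ⌊n * R⌋₊ + t ≤ n := by
  filter_upwards [((tendsto_natCast_atTop_atTop (R := ℝ)).atTop_mul_const
    (sub_pos.2 hR1)).eventually_ge_atTop (t : ℝ)] with n hn
  have hfloor := Nat.floor_le (mul_nonneg n.cast_nonneg hR0)
  have : ((⌊n * R⌋₊ + t : ℕ) : ℝ) ≤ n := by push_cast; linarith
  exact_mod_cast this

def delta0Set (F : Type) [Field F] (t : ℕ) (R1 : ℝ) (n : ℕ) : Set ℝ :=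
  {r : ℝ | ∃ (d : ℕ) (C₁ C₂ : Submodule F (Fin n → F)), C₂ ≤ C₁ ∧
    t ≤ finrank F C₁ - finrank F C₂ ∧
    (finrank F C₁ : ℝ) ≥ (n : ℝ) * R1 ∧
    (finrank F C₂ : ℝ) ≤ (n : ℝ) * R1 ∧
    RGHW F t C₁ C₂ ≥ d ∧ r = (d : ℝ) / n}

section Delta0

variable {F : Type} [Field F] {t n : ℕ} {R1 : ℝ}

theorem le_of_mem_delta0Set (hn : 0 < n) {r : ℝ} (hr : r ∈ delta0Set F t R1 n) :
    r ≤ 1 - R1 + t / n := by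
  obtain ⟨d, C₁, C₂, h₂₁, ht, hC₁, -, hd, rfl⟩ := hr
  have hdim := Submodule.finrank_mono h₂₁
  have hC₁n : finrank F C₁ ≤ n := by simpa using C₁.finrank_le
  have hRGHW : RGHW F t C₁ C₂ ≤ n + t - finrank F C₁ := RGHW_le (by omega)
  have hdn : d + finrank F C₁ ≤ n + t := by omega
  have hdn' : (d : ℝ) + finrank F C₁ ≤ n + t := by exact_mod_cast hdn
  have hn' : (0 : ℝ) < n := by exact_mod_cast hn
  rw [div_le_iff₀ hn', add_mul, sub_mul, div_mul_cancel₀ _ hn'.ne']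
  linarith

theorem sSup_delta0Set_le (hn : 0 < n) (hR1 : R1 ≤ 1) :
    sSup (delta0Set F t R1 n) ≤ 1 - R1 + t / n :=
  Real.sSup_le (fun _ => le_of_mem_delta0Set hn) (by positivity)

theorem le_sSup_delta0Set (ht : 1 ≤ t) (hR1 : 0 ≤ R1) (hn : ⌊n * R1⌋₊ + t ≤ n) :
    1 - R1 ≤ sSup (delta0Set F t R1 n) := by
  set k := ⌊n * R1⌋₊
  obtain ⟨K, -, hK⟩ :=
    Finset.exists_subset_card_eq (s := (Finset.univ : Finset (Fin n))) (n := k) (by simp; omega)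
  obtain ⟨C, hKC, hC, hone⟩ := exists_VI_le_one_mem (F := F) ht (hK ▸ hn)
  have hk : (k : ℝ) ≤ n * R1 := Nat.floor_le (by positivity)
  have hmem : ((n - k : ℕ) : ℝ) / n ∈ delta0Set F t R1 n := by
    refine ⟨n - k, C, VI F n K, hKC, ?_, ?_, ?_, hK ▸ sub_card_le_RGHW hKC hC hone, rfl⟩
    · rw [hC, finrank_VI]
      omega
    · rw [hC, hK, ge_iff_le]
      have := Nat.lt_floor_add_one ((n : ℝ) * R1)
      have : (1 : ℝ) ≤ t := by exact_mod_cast ht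
      push_cast
      linarith
    · rwa [finrank_VI, hK]
  have hn' : (0 : ℝ) < n := by exact_mod_cast (show 0 < n by omega)
  refine le_trans ?_ (le_csSup ⟨_, fun _ => le_of_mem_delta0Set (by omega)⟩ hmem)
  rw [le_div_iff₀ hn', Nat.cast_sub (by omega)]
  linarith

end Delta0

theorem delta0_eq_general (F : Type) [Field F]
    (t : ℕ) (ht : 1 ≤ t) (R1 : ℝ) (hR10 : 0 ≤ R1) (hR11 : R1 < 1) :
    Filter.limsup (fun n : ℕ =>
        sSup {r : ℝ | ∃ (d : ℕ) (C₁ C₂ : Submodule F (Fin n → F)), C₂ ≤ C₁ ∧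
          t ≤ Module.finrank F C₁ - Module.finrank F C₂ ∧
          (Module.finrank F C₁ : ℝ) ≥ (n : ℝ) * R1 ∧
          (Module.finrank F C₂ : ℝ) ≤ (n : ℝ) * R1 ∧
          RGHW F t C₁ C₂ ≥ d ∧ r = (d : ℝ) / n})
      Filter.atTop = 1 - R1 := by
  change Filter.limsup (fun n => sSup (delta0Set F t R1 n)) Filter.atTop = 1 - R1
  have hupper : Filter.Tendsto (fun n : ℕ => 1 - R1 + t / n) Filter.atTop (nhds (1 - R1)) := by
    simpa using tendsto_const_nhds.add (tendsto_const_div_atTop_nhds_zero_nat (t : ℝ))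
  refine (tendsto_of_tendsto_of_tendsto_of_le_of_le' tendsto_const_nhds hupper ?_ ?_).limsup_eq
  · filter_upwards [eventually_floor_mul_add_le hR10 hR11 t] with n hn
    exact le_sSup_delta0Set ht hR10 hn
  · filter_upwards [Filter.eventually_gt_atTop 0] with n hn
    exact sSup_delta0Set_le hn hR11.le

/-- Theorem 4, Eq. (14): `δ⁰_q(t, R₁, R₁) = 1 - R₁`. -/
theorem delta0_eq (F : Type) [Field F] [Fintype F]
    (t : ℕ) (ht : 1 ≤ t) (R1 : ℝ) (hR10 : 0 ≤ R1) (hR11 : R1 < 1) :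
    Filter.limsup (fun n : ℕ =>
        sSup {r : ℝ | ∃ (d : ℕ) (C₁ C₂ : Submodule F (Fin n → F)), C₂ ≤ C₁ ∧
          t ≤ Module.finrank F C₁ - Module.finrank F C₂ ∧
          (Module.finrank F C₁ : ℝ) ≥ (n : ℝ) * R1 ∧
          (Module.finrank F C₂ : ℝ) ≤ (n : ℝ) * R1 ∧
          RGHW F t C₁ C₂ ≥ d ∧ r = (d : ℝ) / n})
      Filter.atTop = 1 - R1 :=
  delta0_eq_general F t ht R1 hR10 hR11
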